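/- Let α, β ∈ ℝ with β ≠ 0, and let u, v : ℝ² → ℝ be smooth functions of (x,y) satisfying the pair of reduction equations ∂_y(u_y + u_x v_x) + ∂_x(u_y v_x + u_x v_x² + u u_x) = (3β)⁻¹ v_{xxx} and v_x = α u everywhere. Then u satisfies the second-order equation u_{yy} + ∂_x( 2α u_y u + α² u_x u² + u u_x − (α/(3β)) u_x ) = 0. -/

import Mathlib

/-- Partial derivative in `x` of a function on `ℝ² = (x,y)`. -/
noncomputable def pdx (f : ℝ × ℝ → ℝ) (q : ℝ × ℝ) : ℝ :=
  deriv (fun s => f (s, q.2)) q.1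

/-- Partial derivative in `y` of a function on `ℝ² = (x,y)`. -/
noncomputable def pdy (f : ℝ × ℝ → ℝ) (q : ℝ × ℝ) : ℝ :=
  deriv (fun s => f (q.1, s)) q.2

/-!
After substituting `v_x = α u` (so that `v_xxx = α u_xx`), the order-3 reduction and the claimed
equation differ only by `α (∂_y(u u_x) - ∂_x(u u_y))`; both terms equal `u_x u_y + u u_xy` by the
product rule and the symmetry of second derivatives, so the difference vanishes.
-/

section PartialDerivatives

variable {f g : ℝ × ℝ → ℝ} {q : ℝ × ℝ}

theorem hasDerivAt_pdx (hf : DifferentiableAt ℝ f q) :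
    HasDerivAt (fun s => f (s, q.2)) (pdx f q) q.1 :=
  (hf.comp q.1 (differentiableAt_id.prodMk (differentiableAt_const q.2))).hasDerivAt

theorem hasDerivAt_pdy (hf : DifferentiableAt ℝ f q) :
    HasDerivAt (fun s => f (q.1, s)) (pdy f q) q.2 :=
  (hf.comp q.2 ((differentiableAt_const q.1).prodMk differentiableAt_id)).hasDerivAt

theorem pdx_eq_fderiv (hf : DifferentiableAt ℝ f q) : pdx f q = fderiv ℝ f q (1, 0) :=
  (hf.hasFDerivAt.comp_hasDerivAt q.1
    ((hasDerivAt_id q.1).prodMk (hasDerivAt_const q.1 q.2))).deriv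

theorem pdy_eq_fderiv (hf : DifferentiableAt ℝ f q) : pdy f q = fderiv ℝ f q (0, 1) :=
  (hf.hasFDerivAt.comp_hasDerivAt q.2
    ((hasDerivAt_const q.2 q.1).prodMk (hasDerivAt_id q.2))).deriv

theorem pdx_add (hf : DifferentiableAt ℝ f q) (hg : DifferentiableAt ℝ g q) :
    pdx (fun s => f s + g s) q = pdx f q + pdx g q :=
  ((hasDerivAt_pdx hf).add (hasDerivAt_pdx hg)).deriv

theorem pdy_add (hf : DifferentiableAt ℝ f q) (hg : DifferentiableAt ℝ g q) :
    pdy (fun s => f s + g s) q = pdy f q + pdy g q :=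
  ((hasDerivAt_pdy hf).add (hasDerivAt_pdy hg)).deriv

theorem pdx_sub (hf : DifferentiableAt ℝ f q) (hg : DifferentiableAt ℝ g q) :
    pdx (fun s => f s - g s) q = pdx f q - pdx g q :=
  ((hasDerivAt_pdx hf).sub (hasDerivAt_pdx hg)).deriv

theorem pdx_mul (hf : DifferentiableAt ℝ f q) (hg : DifferentiableAt ℝ g q) :
    pdx (fun s => f s * g s) q = pdx f q * g q + f q * pdx g q :=
  ((hasDerivAt_pdx hf).mul (hasDerivAt_pdx hg)).deriv

theorem pdy_mul (hf : DifferentiableAt ℝ f q) (hg : DifferentiableAt ℝ g q) :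
    pdy (fun s => f s * g s) q = pdy f q * g q + f q * pdy g q :=
  ((hasDerivAt_pdy hf).mul (hasDerivAt_pdy hg)).deriv

theorem pdx_const_mul (c : ℝ) (f : ℝ × ℝ → ℝ) : pdx (fun s => c * f s) = fun s => c * pdx f s :=
  funext fun _ => deriv_const_mul_field c

theorem pdy_const_mul (c : ℝ) (f : ℝ × ℝ → ℝ) : pdy (fun s => c * f s) = fun s => c * pdy f s :=
  funext fun _ => deriv_const_mul_field c

theorem contDiff_pdx {n m : WithTop ℕ∞} (hf : ContDiff ℝ n f) (hmn : m + 1 ≤ n) :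
    ContDiff ℝ m (pdx f) := by
  have hf₁ : Differentiable ℝ f := hf.differentiable fun h => by simp [h] at hmn
  rw [show pdx f = fun s => fderiv ℝ f s (1, 0) from funext fun q => pdx_eq_fderiv (hf₁ q)]
  exact (hf.fderiv_right hmn).clm_apply contDiff_const

theorem contDiff_pdy {n m : WithTop ℕ∞} (hf : ContDiff ℝ n f) (hmn : m + 1 ≤ n) :
    ContDiff ℝ m (pdy f) := by
  have hf₁ : Differentiable ℝ f := hf.differentiable fun h => by simp [h] at hmn
  rw [show pdy f = fun s => fderiv ℝ f s (0, 1) from funext fun q => pdy_eq_fderiv (hf₁ q)]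
  exact (hf.fderiv_right hmn).clm_apply contDiff_const

theorem pdx_pdy_comm (hf : ContDiff ℝ 2 f) (q : ℝ × ℝ) : pdx (pdy f) q = pdy (pdx f) q := by
  have hf₁ : Differentiable ℝ f := hf.differentiable two_ne_zero
  have hD : DifferentiableAt ℝ (fderiv ℝ f) q :=
    (hf.fderiv_right (m := 1) le_rfl).differentiable one_ne_zero q
  have hDw (w : ℝ × ℝ) : DifferentiableAt ℝ (fun s => fderiv ℝ f s w) q :=
    hD.clm_apply (differentiableAt_const w)
  rw [show pdx f = fun s => fderiv ℝ f s (1, 0) from funext fun s => pdx_eq_fderiv (hf₁ s),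
    show pdy f = fun s => fderiv ℝ f s (0, 1) from funext fun s => pdy_eq_fderiv (hf₁ s),
    pdx_eq_fderiv (hDw _), pdy_eq_fderiv (hDw _), fderiv_clm_apply hD (differentiableAt_const _),
    fderiv_clm_apply hD (differentiableAt_const _)]
  simpa using hf.contDiffAt.isSymmSndFDerivAt (by simp) (1, 0) (0, 1)

theorem pdx_mul_pdy_eq_pdy_mul_pdx (hf : ContDiff ℝ 2 f) (q : ℝ × ℝ) :
    pdx (fun s => f s * pdy f s) q = pdy (fun s => f s * pdx f s) q := by
  have hf₁ : Differentiable ℝ f := hf.differentiable two_ne_zero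
  rw [pdx_mul (hf₁ q) ((contDiff_pdy hf le_rfl).differentiable one_ne_zero q),
    pdy_mul (hf₁ q) ((contDiff_pdx hf le_rfl).differentiable one_ne_zero q), pdx_pdy_comm hf]
  ring

end PartialDerivatives

theorem second_order_equation_from_reductions_general (α β : ℝ) (u v : ℝ × ℝ → ℝ)
    (hu : ContDiff ℝ (⊤ : ℕ∞) u)
    (h3 : ∀ q : ℝ × ℝ,
      pdy (fun s => pdy u s + pdx u s * pdx v s) q
        + pdx (fun s => pdy u s * pdx v s + pdx u s * (pdx v s) ^ 2 + u s * pdx u s) q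
        = (3 * β)⁻¹ * pdx (pdx (pdx v)) q)
    (h1 : ∀ q : ℝ × ℝ, pdx v q = α * u q) :
    ∀ q : ℝ × ℝ,
      pdy (pdy u) q
        + pdx (fun s => 2 * α * pdy u s * u s + α ^ 2 * pdx u s * (u s) ^ 2
            + u s * pdx u s - (α / (3 * β)) * pdx u s) q = 0 := by
  intro q
  have hu₂ : ContDiff ℝ 2 u := hu.of_le (WithTop.coe_le_coe.mpr le_top)
  have hd : Differentiable ℝ u := hu₂.differentiable two_ne_zero
  have hdx : Differentiable ℝ (pdx u) := (contDiff_pdx hu₂ le_rfl).differentiable one_ne_zero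
  have hdy : Differentiable ℝ (pdy u) := (contDiff_pdy hu₂ le_rfl).differentiable one_ne_zero
  set G := fun s => α * (u s * pdy u s) + (α ^ 2 * pdx u s * u s ^ 2 + u s * pdx u s)
  have hvxxx : pdx (pdx (pdx v)) q = α * pdx (pdx u) q := by
    simp only [show pdx v = fun s => α * u s from funext h1, pdx_const_mul]
  have hF : (fun s => pdy u s + pdx u s * pdx v s) = fun s => pdy u s + α * (u s * pdx u s) := by
    funext s; rw [h1]; ring
  have hG : (fun s => pdy u s * pdx v s + pdx u s * (pdx v s) ^ 2 + u s * pdx u s) = G := by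
    funext s; rw [h1]; ring
  have hT : (fun s => 2 * α * pdy u s * u s + α ^ 2 * pdx u s * (u s) ^ 2
      + u s * pdx u s - (α / (3 * β)) * pdx u s)
      = fun s => (α * (u s * pdy u s) + G s) - (α / (3 * β)) * pdx u s := by
    funext s; ring
  have h := h3 q
  rw [hF, hG, hvxxx, pdy_add (hdy q) (by fun_prop)] at h
  rw [hT, pdx_sub (by fun_prop) (by fun_prop), pdx_add (by fun_prop) (by fun_prop)]
  simp only [pdx_const_mul, pdy_const_mul] at h ⊢
  linear_combination h + α * pdx_mul_pdy_eq_pdy_mul_pdx hu₂ q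

/-- Imposing the order `k = 3` reduction
`∂_y(u_y + u_x v_x) + ∂_x(u_y v_x + u_x v_x² + u u_x) = (3β)⁻¹ v_{xxx}` together with
the interpolating-system constraint `v_x = α u` yields the second-order equation
`u_{yy} + ∂_x(2α u_y u + α² u_x u² + u u_x − (α/(3β)) u_x) = 0`. -/
theorem second_order_equation_from_reductions (α β : ℝ) (hβ : β ≠ 0) (u v : ℝ × ℝ → ℝ)
    (hu : ContDiff ℝ (⊤ : ℕ∞) u) (hv : ContDiff ℝ (⊤ : ℕ∞) v)
    (h3 : ∀ q : ℝ × ℝ,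
      pdy (fun s => pdy u s + pdx u s * pdx v s) q
        + pdx (fun s => pdy u s * pdx v s + pdx u s * (pdx v s) ^ 2 + u s * pdx u s) q
        = (3 * β)⁻¹ * pdx (pdx (pdx v)) q)
    (h1 : ∀ q : ℝ × ℝ, pdx v q = α * u q) :
    ∀ q : ℝ × ℝ,
      pdy (pdy u) q
        + pdx (fun s => 2 * α * pdy u s * u s + α ^ 2 * pdx u s * (u s) ^ 2
            + u s * pdx u s - (α / (3 * β)) * pdx u s) q = 0 :=
  second_order_equation_from_reductions_general α β u v hu h3 h1
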